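/- arXiv:2307.16630 — 10 statements merged into one kernel-verified Lean document; each statement's English description precedes it below -/
import Mathlib

section
/- Let Y be a set of labels with at least two elements, let n be a positive integer, let ε > 0, and let h : ℤⁿ → Y be any function. Let a > 0 be the normalizing constant with a · ∑_{z ∈ ℤⁿ} exp(−ε‖z‖₁) = 1, and for τ ∈ ℤⁿ let P_τ be the probability mass function on ℤⁿ given by P_τ(z) = a · exp(−ε‖z − τ‖₁). Suppose y_A ∈ Y and real numbers p_A, p_B with 0 < p_B ≤ p_A ≤ 1 satisfy: ∑_{z ∈ ℤⁿ} P_τ(z)·1[h(z) = y_A] ≥ p_A, and for every y ≠ y_A, ∑_{z ∈ ℤⁿ} P_τ(z)·1[h(z) = y] ≤ p_B. Then for every δ ∈ ℤⁿ with ‖δ‖₁ ≤ max{ (1/(2ε))·ln(p_A/p_B), −(1/ε)·ln(1 − p_A + p_B) } and every y ≠ y_A, it holds that ∑_{z ∈ ℤⁿ} P_{τ+δ}(z)·1[h(z) = y_A] ≥ ∑_{z ∈ ℤⁿ} P_{τ+δ}(z)·1[h(z) = y]. -/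
/-!
Moving the centre of the discrete Laplace noise from `τ` to `τ + δ` changes its mass function
pointwise by at most the factor `E = exp (ε ‖δ‖₁)`, in both directions (triangle inequality for
`‖·‖₁`). Hence the shifted mass of class `y` is at most `E p_B`, while the shifted mass of `y_A`
is at least `p_A / E` and, passing to complements, at least `1 - E (1 - p_A)`. The two branches of
the radius, `E² p_B ≤ p_A` and `E (1 - p_A + p_B) ≤ 1`, are exactly what makes one of these lower
bounds exceed `E p_B`.
-/

section LikelihoodRatio

variable {α Y : Type*}

theorem Summable.mul_of_nonneg_of_le_one {p w : α → ℝ} (hp : Summable p) (hp0 : 0 ≤ p)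
    (hw0 : 0 ≤ w) (hw1 : w ≤ 1) : Summable fun z ↦ p z * w z :=
  hp.of_nonneg_of_le (fun z ↦ mul_nonneg (hp0 z) (hw0 z))
    (fun z ↦ mul_le_of_le_one_right (hp0 z) (hw1 z))

theorem tsum_mul_le_mul_tsum_mul {p q w : α → ℝ} {E : ℝ} (hp : Summable p) (hp0 : 0 ≤ p)
    (hq0 : 0 ≤ q) (hw0 : 0 ≤ w) (hw1 : w ≤ 1) (hqp : ∀ z, q z ≤ E * p z) :
    ∑' z, q z * w z ≤ E * ∑' z, p z * w z := by
  have hpw := (hp.mul_of_nonneg_of_le_one hp0 hw0 hw1).mul_left E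
  have hqw_le : ∀ z, q z * w z ≤ E * (p z * w z) := fun z ↦
    (mul_le_mul_of_nonneg_right (hqp z) (hw0 z)).trans_eq (mul_assoc _ _ _)
  rw [← tsum_mul_left]
  exact (hpw.of_nonneg_of_le (fun z ↦ mul_nonneg (hq0 z) (hw0 z)) hqw_le).tsum_le_tsum hqw_le hpw

variable [DecidableEq Y]

noncomputable def classIndicator (h : α → Y) (y : Y) : α → ℝ :=
  fun z ↦ if h z = y then 1 else 0

theorem classIndicator_nonneg (h : α → Y) (y : Y) : 0 ≤ classIndicator h y :=
  fun z ↦ by unfold classIndicator; split_ifs <;> norm_num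

theorem classIndicator_le_one (h : α → Y) (y : Y) : classIndicator h y ≤ 1 :=
  fun z ↦ by unfold classIndicator; split_ifs <;> norm_num

noncomputable def classMass (p : α → ℝ) (h : α → Y) (y : Y) : ℝ :=
  ∑' z, p z * classIndicator h y z

theorem classMass_le_mul_classMass {p q : α → ℝ} {E : ℝ} (hp : Summable p) (hp0 : 0 ≤ p)
    (hq0 : 0 ≤ q) (hqp : ∀ z, q z ≤ E * p z) (h : α → Y) (y : Y) :
    classMass q h y ≤ E * classMass p h y :=
  tsum_mul_le_mul_tsum_mul hp hp0 hq0 (classIndicator_nonneg h y) (classIndicator_le_one h y) hqp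

theorem one_sub_classMass_eq {p : α → ℝ} (hp : HasSum p 1) (hp0 : 0 ≤ p) (h : α → Y) (y : Y) :
    1 - classMass p h y = ∑' z, p z * (1 - classIndicator h y z) := by
  simp only [mul_one_sub]
  rw [hp.summable.tsum_sub
    (hp.summable.mul_of_nonneg_of_le_one hp0 (classIndicator_nonneg h y)
      (classIndicator_le_one h y)),
    hp.tsum_eq, classMass]

theorem one_sub_classMass_le {p q : α → ℝ} {E : ℝ} (hp : HasSum p 1) (hq : HasSum q 1)
    (hp0 : 0 ≤ p) (hq0 : 0 ≤ q) (hqp : ∀ z, q z ≤ E * p z) (h : α → Y) (y : Y) :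
    1 - classMass q h y ≤ E * (1 - classMass p h y) := by
  rw [one_sub_classMass_eq hp hp0, one_sub_classMass_eq hq hq0]
  exact tsum_mul_le_mul_tsum_mul hp.summable hp0 hq0
    (fun z ↦ sub_nonneg.2 (classIndicator_le_one h y z))
    (fun z ↦ sub_le_self _ (classIndicator_nonneg h y z)) hqp

theorem classMass_le_classMass_of_ratio_le {p q : α → ℝ} {E : ℝ} (hp : HasSum p 1)
    (hq : HasSum q 1) (hp0 : 0 ≤ p) (hq0 : 0 ≤ q) (hE : 0 < E) (hqp : ∀ z, q z ≤ E * p z)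
    (hpq : ∀ z, p z ≤ E * q z) {h : α → Y} {yA y : Y} {pA pB : ℝ} (hA : pA ≤ classMass p h yA)
    (hB : classMass p h y ≤ pB) (hradius : E ^ 2 * pB ≤ pA ∨ E * (1 - pA + pB) ≤ 1) :
    classMass q h y ≤ classMass q h yA := by
  have hy : classMass q h y ≤ E * pB :=
    (classMass_le_mul_classMass hp.summable hp0 hq0 hqp h y).trans
      (mul_le_mul_of_nonneg_left hB hE.le)
  rcases hradius with hradius | hradius
  · have hyA := classMass_le_mul_classMass hq.summable hq0 hp0 hpq h yA
    have hE2 : E * (E * pB) ≤ E * classMass q h yA := by nlinarith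
    exact hy.trans (le_of_mul_le_mul_left hE2 hE)
  · have hyA := one_sub_classMass_le hp hq hp0 hq0 hqp h yA
    nlinarith

end LikelihoodRatio

section DiscreteLaplace

variable {ι : Type*} [Fintype ι]

noncomputable def l1Norm (v : ι → ℤ) : ℝ := ∑ i, |(v i : ℝ)|

theorem l1Norm_add_le (u v : ι → ℤ) : l1Norm (u + v) ≤ l1Norm u + l1Norm v := by
  rw [l1Norm, l1Norm, l1Norm, ← Finset.sum_add_distrib]
  exact Finset.sum_le_sum fun i _ ↦ by
    simpa only [Pi.add_apply, Int.cast_add] using abs_add_le (u i : ℝ) (v i)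

@[simp]
theorem l1Norm_neg (v : ι → ℤ) : l1Norm (-v) = l1Norm v := by
  simp [l1Norm]

noncomputable def discreteLaplace (ε a : ℝ) (τ z : ι → ℤ) : ℝ :=
  a * Real.exp (-ε * l1Norm (z - τ))

variable {ε a : ℝ}

theorem discreteLaplace_nonneg (ha : 0 ≤ a) (τ : ι → ℤ) : 0 ≤ discreteLaplace ε a τ :=
  fun _ ↦ mul_nonneg ha (Real.exp_pos _).le

theorem hasSum_discreteLaplace (hnorm : a * ∑' z : ι → ℤ, Real.exp (-ε * l1Norm z) = 1)
    (τ : ι → ℤ) : HasSum (discreteLaplace ε a τ) 1 := by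
  have hs : Summable fun z : ι → ℤ ↦ Real.exp (-ε * l1Norm z) := by
    by_contra hns
    rw [tsum_eq_zero_of_not_summable hns, mul_zero] at hnorm
    exact zero_ne_one hnorm
  have hcentred : HasSum (fun z : ι → ℤ ↦ a * Real.exp (-ε * l1Norm z)) 1 := by
    simpa only [tsum_mul_left, hnorm] using (hs.mul_left a).hasSum
  refine (Equiv.addRight τ).hasSum_iff.mp ?_
  simpa only [Function.comp_def, Equiv.coe_addRight, discreteLaplace, add_sub_cancel_right]
    using hcentred

theorem discreteLaplace_add_le (hε : 0 ≤ ε) (ha : 0 ≤ a) (τ δ z : ι → ℤ) :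
    discreteLaplace ε a (τ + δ) z ≤ Real.exp (ε * l1Norm δ) * discreteLaplace ε a τ z := by
  have htri : l1Norm (z - τ) ≤ l1Norm (z - (τ + δ)) + l1Norm δ := by
    simpa only [sub_add_eq_sub_sub, sub_add_cancel] using l1Norm_add_le (z - (τ + δ)) δ
  rw [discreteLaplace, discreteLaplace, mul_left_comm, ← Real.exp_add]
  gcongr
  nlinarith

theorem discreteLaplace_le_add (hε : 0 ≤ ε) (ha : 0 ≤ a) (τ δ z : ι → ℤ) :
    discreteLaplace ε a τ z ≤ Real.exp (ε * l1Norm δ) * discreteLaplace ε a (τ + δ) z := by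
  simpa using discreteLaplace_add_le hε ha (τ + δ) (-δ) z

end DiscreteLaplace

theorem exp_sq_mul_le_or_exp_mul_le_one {ε pA pB D : ℝ} (hε : 0 < ε) (hpB : 0 < pB)
    (hBA : pB ≤ pA) (hpA : pA ≤ 1)
    (hD : D ≤ max ((1 / (2 * ε)) * Real.log (pA / pB)) (-(1 / ε) * Real.log (1 - pA + pB))) :
    Real.exp (ε * D) ^ 2 * pB ≤ pA ∨ Real.exp (ε * D) * (1 - pA + pB) ≤ 1 := by
  rcases le_max_iff.mp hD with hD | hD
  · left
    have hlog : 2 * (ε * D) ≤ Real.log (pA / pB) := by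
      have h2ε := mul_le_mul_of_nonneg_left hD (by positivity : 0 ≤ 2 * ε)
      rwa [← mul_assoc, mul_one_div_cancel (by positivity), one_mul, mul_assoc] at h2ε
    rw [← Real.exp_nat_mul, ← le_div_iff₀ hpB, ← Real.exp_log (div_pos (hpB.trans_le hBA) hpB)]
    exact_mod_cast Real.exp_le_exp.2 hlog
  · right
    have hq : 0 < 1 - pA + pB := by linarith
    have hlog : ε * D ≤ -Real.log (1 - pA + pB) := by
      have hεD := mul_le_mul_of_nonneg_left hD hε.le
      rwa [neg_mul, mul_neg, ← mul_assoc, mul_one_div_cancel hε.ne', one_mul] at hεD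
    rw [← le_div_iff₀ hq, one_div, ← Real.exp_log (inv_pos.2 hq), Real.log_inv]
    exact Real.exp_le_exp.2 hlog

theorem staircase_certified_robustness_general
    {Y : Type*} [DecidableEq Y]
    (n : ℕ) (ε : ℝ) (hε : 0 < ε)
    (h : (Fin n → ℤ) → Y) (a : ℝ) (ha : 0 < a)
    (hnorm : a * ∑' z : Fin n → ℤ, Real.exp (-ε * ∑ i, |(z i : ℝ)|) = 1)
    (τ : Fin n → ℤ) (yA : Y) (pA pB : ℝ)
    (hpB : 0 < pB) (hBA : pB ≤ pA) (hpA : pA ≤ 1)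
    (hA : pA ≤ ∑' z : Fin n → ℤ,
      (a * Real.exp (-ε * ∑ i, |((z i - τ i : ℤ) : ℝ)|)) * (if h z = yA then 1 else 0))
    (hB : ∀ y : Y, y ≠ yA → ∑' z : Fin n → ℤ,
      (a * Real.exp (-ε * ∑ i, |((z i - τ i : ℤ) : ℝ)|)) * (if h z = y then 1 else 0) ≤ pB)
    (δ : Fin n → ℤ)
    (hδ : (∑ i, |(δ i : ℝ)|) ≤
      max ((1 / (2 * ε)) * Real.log (pA / pB)) (-(1 / ε) * Real.log (1 - pA + pB)))
    (y : Y) (hy : y ≠ yA) :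
    ∑' z : Fin n → ℤ,
        (a * Real.exp (-ε * ∑ i, |((z i - (τ i + δ i) : ℤ) : ℝ)|)) * (if h z = y then 1 else 0)
      ≤ ∑' z : Fin n → ℤ,
        (a * Real.exp (-ε * ∑ i, |((z i - (τ i + δ i) : ℤ) : ℝ)|)) *
          (if h z = yA then 1 else 0) :=
  classMass_le_classMass_of_ratio_le (p := discreteLaplace ε a τ)
    (q := discreteLaplace ε a (τ + δ)) (hasSum_discreteLaplace hnorm τ)
    (hasSum_discreteLaplace hnorm (τ + δ)) (discreteLaplace_nonneg ha.le τ)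
    (discreteLaplace_nonneg ha.le (τ + δ)) (Real.exp_pos _)
    (discreteLaplace_add_le hε.le ha.le τ δ) (discreteLaplace_le_add hε.le ha.le τ δ) hA
    (hB y hy) (exp_sq_mul_le_or_exp_mul_le_one hε hpB hBA hpA hδ)

/-- Theorem 1 of the paper: certified robustness of the staircase-smoothed classifier
against synonym substitution, for the lattice-supported staircase (discrete Laplace)
noise `P_τ(z) = a · exp(−ε‖z − τ‖₁)` on `ℤⁿ`. -/
theorem staircase_certified_robustness
    {Y : Type*} [Nontrivial Y] [DecidableEq Y]
    (n : ℕ) (hn : 0 < n) (ε : ℝ) (hε : 0 < ε)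
    (h : (Fin n → ℤ) → Y) (a : ℝ) (ha : 0 < a)
    (hnorm : a * ∑' z : Fin n → ℤ, Real.exp (-ε * ∑ i, |(z i : ℝ)|) = 1)
    (τ : Fin n → ℤ) (yA : Y) (pA pB : ℝ)
    (hpB : 0 < pB) (hBA : pB ≤ pA) (hpA : pA ≤ 1)
    (hA : pA ≤ ∑' z : Fin n → ℤ,
      (a * Real.exp (-ε * ∑ i, |((z i - τ i : ℤ) : ℝ)|)) * (if h z = yA then 1 else 0))
    (hB : ∀ y : Y, y ≠ yA → ∑' z : Fin n → ℤ,
      (a * Real.exp (-ε * ∑ i, |((z i - τ i : ℤ) : ℝ)|)) * (if h z = y then 1 else 0) ≤ pB)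
    (δ : Fin n → ℤ)
    (hδ : (∑ i, |(δ i : ℝ)|) ≤
      max ((1 / (2 * ε)) * Real.log (pA / pB)) (-(1 / ε) * Real.log (1 - pA + pB)))
    (y : Y) (hy : y ≠ yA) :
    ∑' z : Fin n → ℤ,
        (a * Real.exp (-ε * ∑ i, |((z i - (τ i + δ i) : ℤ) : ℝ)|)) * (if h z = y then 1 else 0)
      ≤ ∑' z : Fin n → ℤ,
        (a * Real.exp (-ε * ∑ i, |((z i - (τ i + δ i) : ℤ) : ℝ)|)) *
          (if h z = yA then 1 else 0) :=
  staircase_certified_robustness_general n ε hε h a ha hnorm τ yA pA pB hpB hBA hpA hA hB δ hδ y hy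
end

section
/- Let n be a positive integer, ε > 0, δ ∈ ℤⁿ, and let a > 0 be the normalizing constant with a · ∑_{z ∈ ℤⁿ} exp(−ε‖z‖₁) = 1. Let W be the probability mass function on ℤⁿ given by W(z) = a · exp(−ε‖z‖₁) and V the probability mass function V(z) = a · exp(−ε‖z − δ‖₁). Let h : ℤⁿ → {0,1} be any function and β ≥ 0. (1) If Q = {z ∈ ℤⁿ : ‖z‖₁ − ‖z − δ‖₁ ≤ β} and ∑_{z} W(z)·1[h(z) = 1] ≥ ∑_{z ∈ Q} W(z), then ∑_{z} V(z)·1[h(z) = 1] ≥ ∑_{z ∈ Q} V(z). (2) If Q = {z ∈ ℤⁿ : ‖z‖₁ − ‖z − δ‖₁ ≥ β} and ∑_{z} W(z)·1[h(z) = 1] ≤ ∑_{z ∈ Q} W(z), then ∑_{z} V(z)·1[h(z) = 1] ≤ ∑_{z ∈ Q} V(z). -/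
/-!
On `ℤⁿ` the likelihood ratio of the two staircase distributions is
`V z / W z = exp (ε (‖z‖₁ - ‖z - δ‖₁))`, a monotone function of the statistic
`L z = ‖z‖₁ - ‖z - δ‖₁`, so the sets `{L ≤ β}` and `{β ≤ L}` are likelihood-ratio tests.
For such a test `Q` with threshold `c` and any other test `A`, the function
`(1_A - 1_Q) (V - c W)` is pointwise nonnegative; summing it shows that `V(A) - V(Q)` is
at least `c (W(A) - W(Q))`, which is the Neyman–Pearson inequality.
-/

open Real

section NeymanPearson

variable {α : Type*} {W V : α → ℝ} {c : ℝ}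

theorem neyman_pearson (hc : 0 ≤ c) (hW : Summable W) (hV : Summable V) {Q A : Set α}
    (hQ : ∀ z ∈ Q, V z ≤ c * W z) (hQc : ∀ z ∉ Q, c * W z ≤ V z)
    (hWA : ∑' z, Q.indicator W z ≤ ∑' z, A.indicator W z) :
    ∑' z, Q.indicator V z ≤ ∑' z, A.indicator V z := by
  have hpoint : ∀ z, c * (A.indicator W z - Q.indicator W z)
      ≤ A.indicator V z - Q.indicator V z := by
    intro z
    by_cases hzQ : z ∈ Q <;> by_cases hzA : z ∈ A <;>
      simp [hzQ, hzA, hQ z, hQc z]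
  have hsum := Summable.tsum_le_tsum hpoint
    (((hW.indicator A).sub (hW.indicator Q)).mul_left c) ((hV.indicator A).sub (hV.indicator Q))
  rw [tsum_mul_left, (hW.indicator A).tsum_sub (hW.indicator Q),
    (hV.indicator A).tsum_sub (hV.indicator Q)] at hsum
  nlinarith

theorem neyman_pearson_dual (hc : 0 ≤ c) (hW : Summable W) (hV : Summable V) {Q A : Set α}
    (hQ : ∀ z ∈ Q, c * W z ≤ V z) (hQc : ∀ z ∉ Q, V z ≤ c * W z)
    (hWA : ∑' z, A.indicator W z ≤ ∑' z, Q.indicator W z) :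
    ∑' z, A.indicator V z ≤ ∑' z, Q.indicator V z := by
  have key := neyman_pearson (W := fun z => -W z) (V := fun z => -V z) hc hW.neg hV.neg
    (Q := Q) (A := A) (fun z hz => by linarith [hQ z hz]) (fun z hz => by linarith [hQc z hz])
  simp only [Set.indicator_neg, tsum_neg, neg_le_neg_iff] at key
  exact key hWA

variable {L : α → ℝ} {g : ℝ → ℝ} {β : ℝ}

theorem neyman_pearson_of_monotone_ratio (hg : Monotone g) (hgβ : 0 ≤ g β)
    (hW0 : ∀ z, 0 ≤ W z) (hVW : ∀ z, V z = g (L z) * W z)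
    (hW : Summable W) (hV : Summable V) {A : Set α}
    (hWA : ∑' z, {z | L z ≤ β}.indicator W z ≤ ∑' z, A.indicator W z) :
    ∑' z, {z | L z ≤ β}.indicator V z ≤ ∑' z, A.indicator V z :=
  neyman_pearson hgβ hW hV
    (fun z hz => hVW z ▸ mul_le_mul_of_nonneg_right (hg hz) (hW0 z))
    (fun z hz => hVW z ▸ mul_le_mul_of_nonneg_right (hg (not_le.mp hz).le) (hW0 z)) hWA

theorem neyman_pearson_dual_of_monotone_ratio (hg : Monotone g) (hgβ : 0 ≤ g β)
    (hW0 : ∀ z, 0 ≤ W z) (hVW : ∀ z, V z = g (L z) * W z)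
    (hW : Summable W) (hV : Summable V) {A : Set α}
    (hWA : ∑' z, A.indicator W z ≤ ∑' z, {z | β ≤ L z}.indicator W z) :
    ∑' z, A.indicator V z ≤ ∑' z, {z | β ≤ L z}.indicator V z :=
  neyman_pearson_dual hgβ hW hV
    (fun z hz => hVW z ▸ mul_le_mul_of_nonneg_right (hg hz) (hW0 z))
    (fun z hz => hVW z ▸ mul_le_mul_of_nonneg_right (hg (not_le.mp hz).le) (hW0 z)) hWA

end NeymanPearson

theorem tsum_mul_boole_eq_tsum_indicator {α : Type*} (f : α → ℝ) (p : α → Bool) :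
    ∑' z, f z * (if p z then 1 else 0) = ∑' z, {z | p z}.indicator f z := by
  congr 1
  ext z
  simp [Set.indicator_apply]

theorem staircase_likelihood_ratio (a ε s t : ℝ) :
    a * exp (-ε * t) = exp (ε * (s - t)) * (a * exp (-ε * s)) := by
  rw [mul_left_comm, ← exp_add]
  ring_nf

theorem neyman_pearson_staircase_general
    (n : ℕ) (ε : ℝ) (hε : 0 < ε) (δ : Fin n → ℤ)
    (a : ℝ) (ha : 0 < a)
    (hnorm : a * ∑' z : Fin n → ℤ, Real.exp (-ε * ∑ i, |(z i : ℝ)|) = 1)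
    (h : (Fin n → ℤ) → Bool) (β : ℝ)
    (Q : Set (Fin n → ℤ)) :
    ((Q = {z | (∑ i, |(z i : ℝ)|) - (∑ i, |((z i - δ i : ℤ) : ℝ)|) ≤ β} →
        (∑' z : Fin n → ℤ,
            Q.indicator (fun z => a * Real.exp (-ε * ∑ i, |(z i : ℝ)|)) z)
          ≤ ∑' z : Fin n → ℤ,
            (a * Real.exp (-ε * ∑ i, |(z i : ℝ)|)) * (if h z then 1 else 0) →
        (∑' z : Fin n → ℤ,
            Q.indicator (fun z => a * Real.exp (-ε * ∑ i, |((z i - δ i : ℤ) : ℝ)|)) z)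
          ≤ ∑' z : Fin n → ℤ,
            (a * Real.exp (-ε * ∑ i, |((z i - δ i : ℤ) : ℝ)|)) * (if h z then 1 else 0))
      ∧
     (Q = {z | β ≤ (∑ i, |(z i : ℝ)|) - (∑ i, |((z i - δ i : ℤ) : ℝ)|)} →
        (∑' z : Fin n → ℤ,
            (a * Real.exp (-ε * ∑ i, |(z i : ℝ)|)) * (if h z then 1 else 0))
          ≤ ∑' z : Fin n → ℤ,
            Q.indicator (fun z => a * Real.exp (-ε * ∑ i, |(z i : ℝ)|)) z →
        (∑' z : Fin n → ℤ,
            (a * Real.exp (-ε * ∑ i, |((z i - δ i : ℤ) : ℝ)|)) * (if h z then 1 else 0))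
          ≤ ∑' z : Fin n → ℤ,
            Q.indicator (fun z => a * Real.exp (-ε * ∑ i, |((z i - δ i : ℤ) : ℝ)|)) z)) := by
  have hexp : Summable fun z : Fin n → ℤ => exp (-ε * ∑ i, |(z i : ℝ)|) := by
    by_contra hns
    rw [tsum_eq_zero_of_not_summable hns, mul_zero] at hnorm
    exact zero_ne_one hnorm
  have hW := hexp.mul_left a
  have hV := (Equiv.subRight δ).summable_iff.mpr hW
  have hg : Monotone fun r => exp (ε * r) := exp_monotone.comp (monotone_id.const_mul hε.le)
  have hW0 : ∀ z : Fin n → ℤ, 0 ≤ a * exp (-ε * ∑ i, |(z i : ℝ)|) := fun z => by positivity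
  simp only [tsum_mul_boole_eq_tsum_indicator]
  refine ⟨fun hQ => hQ ▸ ?_, fun hQ => hQ ▸ ?_⟩
  · exact neyman_pearson_of_monotone_ratio hg (exp_pos _).le hW0
      (fun z => staircase_likelihood_ratio _ _ _ _) hW hV
  · exact neyman_pearson_dual_of_monotone_ratio hg (exp_pos _).le hW0
      (fun z => staircase_likelihood_ratio _ _ _ _) hW hV

/-- Lemma 1 of the paper: Neyman–Pearson for the staircase (discrete Laplace) mechanism
under different means, for deterministic binary classifiers on the lattice `ℤⁿ`.
Here `W(z) = a·exp(−ε‖z‖₁)` and `V(z) = a·exp(−ε‖z−δ‖₁)`. -/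
theorem neyman_pearson_staircase
    (n : ℕ) (hn : 0 < n) (ε : ℝ) (hε : 0 < ε) (δ : Fin n → ℤ)
    (a : ℝ) (ha : 0 < a)
    (hnorm : a * ∑' z : Fin n → ℤ, Real.exp (-ε * ∑ i, |(z i : ℝ)|) = 1)
    (h : (Fin n → ℤ) → Bool) (β : ℝ) (hβ : 0 ≤ β)
    (Q : Set (Fin n → ℤ)) :
    ((Q = {z | (∑ i, |(z i : ℝ)|) - (∑ i, |((z i - δ i : ℤ) : ℝ)|) ≤ β} →
        (∑' z : Fin n → ℤ,
            Q.indicator (fun z => a * Real.exp (-ε * ∑ i, |(z i : ℝ)|)) z)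
          ≤ ∑' z : Fin n → ℤ,
            (a * Real.exp (-ε * ∑ i, |(z i : ℝ)|)) * (if h z then 1 else 0) →
        (∑' z : Fin n → ℤ,
            Q.indicator (fun z => a * Real.exp (-ε * ∑ i, |((z i - δ i : ℤ) : ℝ)|)) z)
          ≤ ∑' z : Fin n → ℤ,
            (a * Real.exp (-ε * ∑ i, |((z i - δ i : ℤ) : ℝ)|)) * (if h z then 1 else 0))
      ∧
     (Q = {z | β ≤ (∑ i, |(z i : ℝ)|) - (∑ i, |((z i - δ i : ℤ) : ℝ)|)} →
        (∑' z : Fin n → ℤ,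
            (a * Real.exp (-ε * ∑ i, |(z i : ℝ)|)) * (if h z then 1 else 0))
          ≤ ∑' z : Fin n → ℤ,
            Q.indicator (fun z => a * Real.exp (-ε * ∑ i, |(z i : ℝ)|)) z →
        (∑' z : Fin n → ℤ,
            (a * Real.exp (-ε * ∑ i, |((z i - δ i : ℤ) : ℝ)|)) * (if h z then 1 else 0))
          ≤ ∑' z : Fin n → ℤ,
            Q.indicator (fun z => a * Real.exp (-ε * ∑ i, |((z i - δ i : ℤ) : ℝ)|)) z)) :=
  neyman_pearson_staircase_general n ε hε δ a ha hnorm h β Q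
end

section
/- Let n be a positive integer, ε > 0, δ ∈ ℤⁿ, and let a > 0 satisfy a · ∑_{z ∈ ℤⁿ} exp(−ε‖z‖₁) = 1. Let A ⊆ ℤⁿ and set p_A = a · ∑_{z ∈ A} exp(−ε‖z‖₁). Then a · ∑_{z ∈ A} exp(−ε‖z−δ‖₁) ≥ 1 − exp(ε‖δ‖₁) · (1 − p_A). -/
/-! Pass to complements: if `g ≤ C f` pointwise then `∑_{Aᶜ} g ≤ C ∑_{Aᶜ} f`. For the
staircase densities `f(z) = exp(-ε‖z‖₁)` and `g(z) = f(z - δ)` the triangle inequality gives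
`C = exp(ε‖δ‖₁)`, and both have total mass `1/a` because `ℤⁿ` is invariant under translation
by `δ`. -/

theorem tsum_sub_mul_compl_le_tsum_subtype {α : Type*} {f g : α → ℝ} {C : ℝ}
    (hf : Summable f) (hg : Summable g) (hle : ∀ x, g x ≤ C * f x) (A : Set α) :
    ∑' x, g x - C * (∑' x, f x - ∑' x : A, f x) ≤ ∑' x : A, g x := by
  have hcompl : ∑' x : ↥Aᶜ, g x ≤ C * ∑' x : ↥Aᶜ, f x := by
    rw [← tsum_mul_left]
    exact (hg.subtype _).tsum_le_tsum (fun x => hle x) ((hf.subtype _).mul_left C)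
  rw [← (hf.subtype A).tsum_add_tsum_compl (hf.subtype Aᶜ),
    ← (hg.subtype A).tsum_add_tsum_compl (hg.subtype Aᶜ)]
  linarith

section IntL1

variable {ι : Type*} [Fintype ι]

def intL1 (z : ι → ℤ) : ℝ := ∑ i, |(z i : ℝ)|

theorem intL1_le_intL1_sub_add (z δ : ι → ℤ) : intL1 z ≤ intL1 (z - δ) + intL1 δ := by
  unfold intL1
  rw [← Finset.sum_add_distrib]
  gcongr with i
  push_cast [Pi.sub_apply]
  simpa using abs_add_le ((z i : ℝ) - δ i) (δ i)

theorem exp_neg_intL1_sub_le {ε : ℝ} (hε : 0 ≤ ε) (z δ : ι → ℤ) :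
    Real.exp (-ε * intL1 (z - δ)) ≤ Real.exp (ε * intL1 δ) * Real.exp (-ε * intL1 z) := by
  rw [← Real.exp_add, Real.exp_le_exp]
  nlinarith [intL1_le_intL1_sub_add z δ]

end IntL1

theorem staircase_shift_lower_bound_general
    (n : ℕ) (ε : ℝ) (hε : 0 < ε) (δ : Fin n → ℤ)
    (a : ℝ) (ha : 0 < a)
    (hnorm : a * ∑' z : Fin n → ℤ, Real.exp (-ε * ∑ i, |(z i : ℝ)|) = 1)
    (A : Set (Fin n → ℤ)) :
    1 - Real.exp (ε * ∑ i, |(δ i : ℝ)|) *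
        (1 - a * ∑' z : A, Real.exp (-ε * ∑ i, |((z : Fin n → ℤ) i : ℝ)|))
      ≤ a * ∑' z : A, Real.exp (-ε * ∑ i, |(((z : Fin n → ℤ) i - δ i : ℤ) : ℝ)|) := by
  set f : (Fin n → ℤ) → ℝ := fun z => a * Real.exp (-ε * intL1 z)
  have hmass : ∑' z, f z = 1 := by rw [tsum_mul_left]; exact hnorm
  have hf : Summable f := by
    by_contra h
    rw [tsum_eq_zero_of_not_summable h] at hmass
    exact zero_ne_one hmass
  have hshift : ∑' z, f (z - δ) = 1 := ((Equiv.subRight δ).tsum_eq f).trans hmass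
  have hle : ∀ z, f (z - δ) ≤ Real.exp (ε * intL1 δ) * f z := fun z => by
    rw [mul_left_comm]
    exact mul_le_mul_of_nonneg_left (exp_neg_intL1_sub_le hε.le z δ) ha.le
  have key := tsum_sub_mul_compl_le_tsum_subtype (g := fun z => f (z - δ)) hf
    ((Equiv.subRight δ).summable_iff.mpr hf) hle A
  rw [hshift, hmass] at key
  simp only [f, tsum_mul_left] at key
  exact key

/-- Claim 2 in the proof of the paper's Theorem 1: the staircase (discrete Laplace)
distribution on `ℤⁿ` shifted by `δ` assigns to any set `A` of original mass
`p_A = a·∑_{z∈A} exp(−ε‖z‖₁)` a mass at least `1 − exp(ε‖δ‖₁)(1 − p_A)`. -/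
theorem staircase_shift_lower_bound
    (n : ℕ) (hn : 0 < n) (ε : ℝ) (hε : 0 < ε) (δ : Fin n → ℤ)
    (a : ℝ) (ha : 0 < a)
    (hnorm : a * ∑' z : Fin n → ℤ, Real.exp (-ε * ∑ i, |(z i : ℝ)|) = 1)
    (A : Set (Fin n → ℤ)) :
    1 - Real.exp (ε * ∑ i, |(δ i : ℝ)|) *
        (1 - a * ∑' z : A, Real.exp (-ε * ∑ i, |((z : Fin n → ℤ) i : ℝ)|))
      ≤ a * ∑' z : A, Real.exp (-ε * ∑ i, |(((z : Fin n → ℤ) i - δ i : ℤ) : ℝ)|) :=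
  staircase_shift_lower_bound_general n ε hε δ a ha hnorm A
end

section
/- Let Y be a set of labels, n a positive integer, λ > 0, and let h : ℝⁿ → Y be a function whose label preimages h⁻¹(y) are Lebesgue-measurable. Let μ_λ be the uniform probability measure on the cube [−λ,λ]ⁿ ⊆ ℝⁿ, and for u ∈ ℝⁿ and y ∈ Y define g^y(u) = μ_λ({ρ ∈ [−λ,λ]ⁿ : h(u + ρ) = y}). Suppose y_A ∈ Y and real numbers p_A ≥ p_B in (0,1) satisfy g^{y_A}(u) ≥ p_A and g^y(u) ≤ p_B for every y ≠ y_A. Then for every δ ∈ ℝⁿ with ‖δ‖₁ ≤ λ·(p_A − p_B) and every y ≠ y_A, it holds that g^{y_A}(u + δ) ≥ g^y(u + δ). -/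
/-!
Shifting the centre of the noise by `δ` replaces the cube `C = [-λ, λ]ⁿ` by `C + δ`, and the two
differ only on slabs: `(C + δ) \ C` is covered by the sets where a single coordinate leaves
`[-λ, λ]`, of total volume at most `‖δ‖₁ (2λ)ⁿ⁻¹`. So every `g^y` moves by at most
`‖δ‖₁ / (2λ) ≤ (p_A - p_B) / 2`, and the gap between `p_A` and `p_B` survives the shift.
-/

open MeasureTheory
open scoped BigOperators

/-- The uniform probability measure on the cube `[−λ, λ]ⁿ ⊆ ℝⁿ`: Lebesgue measure
restricted to the cube and normalized by `(2λ)⁻ⁿ`. -/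
noncomputable def cubeUniform (n : ℕ) (lam : ℝ) : Measure (Fin n → ℝ) :=
  (ENNReal.ofReal ((2 * lam) ^ n))⁻¹ •
    volume.restrict (Set.univ.pi fun _ : Fin n => Set.Icc (-lam) lam)

open Set

theorem Real.volume_Icc_add_diff_Icc_le (a b d : ℝ) :
    volume (Icc (a + d) (b + d) \ Icc a b) ≤ ENNReal.ofReal |d| := by
  rcases le_total 0 d with hd | hd
  · calc volume (Icc (a + d) (b + d) \ Icc a b)
        ≤ volume (Ioc b (b + d)) := by
          refine measure_mono fun x ⟨⟨hax, hxb⟩, hx⟩ => ⟨?_, hxb⟩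
          by_contra! h
          exact hx ⟨by linarith, h⟩
      _ = ENNReal.ofReal |d| := by rw [Real.volume_Ioc, abs_of_nonneg hd, add_sub_cancel_left]
  · calc volume (Icc (a + d) (b + d) \ Icc a b)
        ≤ volume (Ico (a + d) a) := by
          refine measure_mono fun x ⟨⟨hax, hxb⟩, hx⟩ => ⟨hax, ?_⟩
          by_contra! h
          exact hx ⟨h, by linarith⟩
      _ = ENNReal.ofReal |d| := by rw [Real.volume_Ico, abs_of_nonpos hd]; ring_nf

theorem Real.volume_pi_Icc_add_diff_Icc_le {ι : Type*} [Fintype ι] [DecidableEq ι]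
    (a b v : ι → ℝ) :
    volume (Icc (a + v) (b + v) \ Icc a b) ≤
      ∑ i, ENNReal.ofReal |v i| * ∏ j ∈ Finset.univ.erase i, ENNReal.ofReal (b j - a j) := by
  set slab : ι → Set (ι → ℝ) := fun i => univ.pi <| Function.update
    (fun j => Icc (a j + v j) (b j + v j)) i (Icc (a i + v i) (b i + v i) \ Icc (a i) (b i))
  have hcover : Icc (a + v) (b + v) \ Icc a b ⊆ ⋃ i, slab i := by
    rintro x ⟨hx, hxab⟩
    rw [← pi_univ_Icc, mem_univ_pi] at hx hxab
    obtain ⟨i, hi⟩ := not_forall.1 hxab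
    refine mem_iUnion.2 ⟨i, mem_univ_pi.2 fun j => ?_⟩
    rcases eq_or_ne j i with rfl | hji
    · rw [Function.update_self]
      exact ⟨hx j, hi⟩
    · rw [Function.update_of_ne hji]
      exact hx j
  have hslab : ∀ i, volume (slab i) ≤
      ENNReal.ofReal |v i| * ∏ j ∈ Finset.univ.erase i, ENNReal.ofReal (b j - a j) := by
    intro i
    rw [volume_pi_pi, ← Finset.mul_prod_erase _ _ (Finset.mem_univ i), Function.update_self]
    gcongr with j hj
    · exact Real.volume_Icc_add_diff_Icc_le _ _ _
    · rw [Function.update_of_ne (Finset.ne_of_mem_erase hj), Real.volume_Icc,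
        add_sub_add_right_eq_sub]
  calc volume (Icc (a + v) (b + v) \ Icc a b)
      ≤ volume (⋃ i, slab i) := measure_mono hcover
    _ ≤ ∑ i, volume (slab i) := measure_iUnion_fintype_le _ _
    _ ≤ _ := Finset.sum_le_sum fun i _ => hslab i

theorem volume_cube_add_diff_cube_le {n : ℕ} {lam : ℝ} (hlam : 0 < lam) (v : Fin n → ℝ) :
    volume (Icc ((fun _ => -lam) + v) ((fun _ => lam) + v) \ Icc (fun _ => -lam) fun _ => lam) ≤
      ENNReal.ofReal ((∑ i, |v i|) / (2 * lam) * (2 * lam) ^ n) := by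
  refine (Real.volume_pi_Icc_add_diff_Icc_le _ _ v).trans_eq ?_
  rw [Finset.sum_div, Finset.sum_mul,
    ENNReal.ofReal_sum_of_nonneg fun i _ => by positivity]
  refine Finset.sum_congr rfl fun i _ => ?_
  obtain ⟨m, rfl⟩ : ∃ m, n = m + 1 := ⟨n - 1, by have := i.pos; omega⟩
  rw [Finset.prod_const, Finset.card_erase_of_mem (Finset.mem_univ i), Finset.card_univ,
    Fintype.card_fin, Nat.add_sub_cancel, ← ENNReal.ofReal_pow (by linarith),
    ← ENNReal.ofReal_mul (abs_nonneg _)]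
  congr 1
  field_simp
  ring

theorem cubeUniform_apply (n : ℕ) (lam : ℝ) (s : Set (Fin n → ℝ)) :
    cubeUniform n lam s =
      (ENNReal.ofReal ((2 * lam) ^ n))⁻¹ * volume (s ∩ Icc (fun _ => -lam) fun _ => lam) := by
  rw [cubeUniform, Measure.smul_apply, smul_eq_mul,
    Measure.restrict_apply' (MeasurableSet.univ_pi fun _ => measurableSet_Icc), pi_univ_Icc]

theorem cubeUniform_preimage_const_add_le {n : ℕ} {lam : ℝ} (hlam : 0 < lam) (δ : Fin n → ℝ)
    (s : Set (Fin n → ℝ)) :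
    cubeUniform n lam ((δ + ·) ⁻¹' s) ≤
      cubeUniform n lam s + ENNReal.ofReal ((∑ i, |δ i|) / (2 * lam)) := by
  rw [cubeUniform_apply, cubeUniform_apply]
  set C : Set (Fin n → ℝ) := Icc (fun _ => -lam) fun _ => lam
  set D : Set (Fin n → ℝ) := Icc ((fun _ => -lam) + δ) ((fun _ => lam) + δ)
  set c := ENNReal.ofReal ((2 * lam) ^ n)
  have hc : c ≠ 0 := ENNReal.ofReal_ne_zero_iff.2 (by positivity)
  have hshift : volume ((δ + ·) ⁻¹' s ∩ C) = volume (s ∩ D) := by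
    have hD : (δ + ·) ⁻¹' D = C := by
      simp only [D, C, preimage_const_add_Icc, add_sub_cancel_right]
    rw [← hD, ← preimage_inter, measure_preimage_add]
  rw [hshift]
  calc c⁻¹ * volume (s ∩ D)
      ≤ c⁻¹ * (volume (s ∩ C) + volume (D \ C)) := by
        have hcover : s ∩ D ⊆ s ∩ C ∪ D \ C := fun x ⟨hs, hxD⟩ =>
          (em (x ∈ C)).imp (fun hxC => ⟨hs, hxC⟩) fun hxC => ⟨hxD, hxC⟩
        gcongr
        exact (measure_mono hcover).trans (measure_union_le _ _)
    _ ≤ c⁻¹ * volume (s ∩ C) +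
          c⁻¹ * ENNReal.ofReal ((∑ i, |δ i|) / (2 * lam) * (2 * lam) ^ n) := by
        rw [mul_add]
        gcongr
        exact volume_cube_add_diff_cube_le hlam δ
    _ = c⁻¹ * volume (s ∩ C) + ENNReal.ofReal ((∑ i, |δ i|) / (2 * lam)) := by
        rw [ENNReal.ofReal_mul (by positivity), mul_comm (ENNReal.ofReal _), ← mul_assoc,
          ENNReal.inv_mul_cancel hc ENNReal.ofReal_ne_top, one_mul]

theorem cubeUniform_le_preimage_const_add {n : ℕ} {lam : ℝ} (hlam : 0 < lam) (δ : Fin n → ℝ)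
    (s : Set (Fin n → ℝ)) :
    cubeUniform n lam s ≤
      cubeUniform n lam ((δ + ·) ⁻¹' s) + ENNReal.ofReal ((∑ i, |δ i|) / (2 * lam)) := by
  simpa only [preimage_preimage, add_neg_cancel_left, preimage_id', Pi.neg_apply, abs_neg] using
    cubeUniform_preimage_const_add_le hlam (-δ) ((δ + ·) ⁻¹' s)

theorem uniform_certified_robustness_general
    {Y : Type*} (n : ℕ) (lam : ℝ) (hlam : 0 < lam)
    (h : (Fin n → ℝ) → Y)
    (u : Fin n → ℝ) (yA : Y) (pA pB : ℝ)
    (hpB : 0 < pB)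
    (hA : ENNReal.ofReal pA ≤ cubeUniform n lam {ρ | h (u + ρ) = yA})
    (hB : ∀ y : Y, y ≠ yA → cubeUniform n lam {ρ | h (u + ρ) = y} ≤ ENNReal.ofReal pB)
    (δ : Fin n → ℝ) (hδ : (∑ i, |δ i|) ≤ lam * (pA - pB))
    (y : Y) (hy : y ≠ yA) :
    cubeUniform n lam {ρ | h (u + δ + ρ) = y}
      ≤ cubeUniform n lam {ρ | h (u + δ + ρ) = yA} := by
  set ε := (∑ i, |δ i|) / (2 * lam)
  have hε : 0 ≤ ε := by positivity
  have hy_le :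
      cubeUniform n lam {ρ | h (u + δ + ρ) = y} ≤ ENNReal.ofReal pB + ENNReal.ofReal ε := by
    simpa only [preimage_ofPred_eq, add_assoc] using
      (cubeUniform_preimage_const_add_le hlam δ {σ | h (u + σ) = y}).trans
        (add_le_add_left (hB y hy) _)
  have hyA_ge :
      ENNReal.ofReal pA ≤ cubeUniform n lam {ρ | h (u + δ + ρ) = yA} + ENNReal.ofReal ε := by
    simpa only [preimage_ofPred_eq, add_assoc] using
      hA.trans (cubeUniform_le_preimage_const_add hlam δ {σ | h (u + σ) = yA})
  have hgap : pB + ε + ε ≤ pA := by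
    have : ε * (2 * lam) ≤ lam * (pA - pB) := by rwa [div_mul_cancel₀ _ (by positivity)]
    nlinarith
  refine ENNReal.le_of_add_le_add_right (a := ENNReal.ofReal ε) ENNReal.ofReal_ne_top ?_
  calc cubeUniform n lam {ρ | h (u + δ + ρ) = y} + ENNReal.ofReal ε
      ≤ ENNReal.ofReal pB + ENNReal.ofReal ε + ENNReal.ofReal ε := by gcongr
    _ = ENNReal.ofReal (pB + ε + ε) := by
        rw [ENNReal.ofReal_add (by positivity) hε, ENNReal.ofReal_add hpB.le hε]
    _ ≤ ENNReal.ofReal pA := ENNReal.ofReal_le_ofReal hgap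
    _ ≤ _ := hyA_ge

/-- Theorem 2 of the paper: the classifier smoothed with uniform noise on `[−λ,λ]ⁿ` is
certifiably robust to any `ℓ₁` perturbation of magnitude at most `RAD_R = λ(p_A − p_B)`. -/
theorem uniform_certified_robustness
    {Y : Type*} (n : ℕ) (hn : 0 < n) (lam : ℝ) (hlam : 0 < lam)
    (h : (Fin n → ℝ) → Y) (hmeas : ∀ y : Y, MeasurableSet {x | h x = y})
    (u : Fin n → ℝ) (yA : Y) (pA pB : ℝ)
    (hpB : 0 < pB) (hBA : pB ≤ pA) (hpA : pA < 1)
    (hA : ENNReal.ofReal pA ≤ cubeUniform n lam {ρ | h (u + ρ) = yA})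
    (hB : ∀ y : Y, y ≠ yA → cubeUniform n lam {ρ | h (u + ρ) = y} ≤ ENNReal.ofReal pB)
    (δ : Fin n → ℝ) (hδ : (∑ i, |δ i|) ≤ lam * (pA - pB))
    (y : Y) (hy : y ≠ yA) :
    cubeUniform n lam {ρ | h (u + δ + ρ) = y}
      ≤ cubeUniform n lam {ρ | h (u + δ + ρ) = yA} :=
  uniform_certified_robustness_general n lam hlam h u yA pA pB hpB hA hB δ hδ y hy
end

section
/- Let n be a positive integer, λ > 0, and let h : ℝⁿ → ℝ be a Lebesgue-measurable function with 0 ≤ h(x) ≤ 1 for all x. Define g : ℝⁿ → ℝ by g(u) = (2λ)⁻ⁿ · ∫_{[−λ,λ]ⁿ} h(u + ρ) dρ (Lebesgue integral over the cube). Then g is (1/(2λ))-Lipschitz with respect to the ℓ₁ norm: for all u, v ∈ ℝⁿ, |g(u) − g(v)| ≤ (1/(2λ))·‖u − v‖₁. -/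
open MeasureTheory Set Function

/-!
After translation, `g u` is `(2λ)⁻ⁿ` times the integral of `h` over the cube `C u` of
half-width `λ` centred at `u`. As `0 ≤ h ≤ 1`, the integral over `C u` exceeds the one over
`C v` by at most the volume of `C u \ C v`. A point of `C u \ C v` leaves `C v` in some
coordinate `i`, so this difference is covered by `n` boxes of volumes `|u i - v i| (2λ)ⁿ⁻¹`.
-/

theorem Set.univ_pi_sdiff_univ_pi_subset {ι : Type*} {α : ι → Type*} [DecidableEq ι]
    (s t : (i : ι) → Set (α i)) :
    univ.pi s \ univ.pi t ⊆ ⋃ i, univ.pi (update s i (s i \ t i)) := by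
  rintro x ⟨hs, ht⟩
  obtain ⟨i, -, hi⟩ := not_forall₂.1 ht
  refine mem_iUnion.2 ⟨i, fun j _ => ?_⟩
  rcases eq_or_ne j i with rfl | hji
  · simpa using ⟨hs j trivial, hi⟩
  · simpa [hji] using hs j trivial

theorem MeasureTheory.Measure.pi_univ_pi_sdiff_le {ι : Type*} {α : ι → Type*} [Fintype ι]
    [DecidableEq ι] [∀ i, MeasurableSpace (α i)] (μ : (i : ι) → Measure (α i))
    [∀ i, SigmaFinite (μ i)] (s t : (i : ι) → Set (α i)) :
    Measure.pi μ (univ.pi s \ univ.pi t)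
      ≤ ∑ i, μ i (s i \ t i) * ∏ j ∈ Finset.univ.erase i, μ j (s j) := by
  calc Measure.pi μ (univ.pi s \ univ.pi t)
      ≤ ∑ i, Measure.pi μ (univ.pi (update s i (s i \ t i))) :=
        (measure_mono (univ_pi_sdiff_univ_pi_subset s t)).trans (measure_iUnion_fintype_le _ _)
    _ = ∑ i, μ i (s i \ t i) * ∏ j ∈ Finset.univ.erase i, μ j (s j) := by
        refine Finset.sum_congr rfl fun i _ => ?_
        rw [Measure.pi_pi, ← Finset.mul_prod_erase _ _ (Finset.mem_univ i), update_self]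
        congr 1
        exact Finset.prod_congr rfl fun j hj => by rw [update_of_ne (Finset.ne_of_mem_erase hj)]

theorem Real.volume_Icc_sdiff_Icc_le (a b c d : ℝ) :
    volume (Icc a b \ Icc c d) ≤ ENNReal.ofReal (c - a) + ENNReal.ofReal (b - d) := by
  have hsub : Icc a b \ Icc c d ⊆ Ico a c ∪ Ioc d b := by
    rintro x ⟨⟨hax, hxb⟩, hcd⟩
    by_cases hcx : c ≤ x
    · exact Or.inr ⟨lt_of_not_ge fun hxd => hcd ⟨hcx, hxd⟩, hxb⟩
    · exact Or.inl ⟨hax, lt_of_not_ge hcx⟩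
  calc volume (Icc a b \ Icc c d) ≤ volume (Ico a c ∪ Ioc d b) := measure_mono hsub
    _ ≤ volume (Ico a c) + volume (Ioc d b) := measure_union_le _ _
    _ = ENNReal.ofReal (c - a) + ENNReal.ofReal (b - d) := by
        rw [Real.volume_Ico, Real.volume_Ioc]

theorem Real.volume_Icc_add_sdiff_Icc_add_le (u v a b : ℝ) :
    volume (Icc (u + a) (u + b) \ Icc (v + a) (v + b)) ≤ ENNReal.ofReal |u - v| := by
  refine (Real.volume_Icc_sdiff_Icc_le _ _ _ _).trans_eq ?_
  rw [add_sub_add_right_eq_sub, add_sub_add_right_eq_sub]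
  rcases le_total u v with huv | hvu
  · rw [ENNReal.ofReal_of_nonpos (sub_nonpos.2 huv), add_zero, abs_sub_comm,
      abs_of_nonneg (sub_nonneg.2 huv)]
  · rw [ENNReal.ofReal_of_nonpos (sub_nonpos.2 hvu), zero_add, abs_of_nonneg (sub_nonneg.2 hvu)]

theorem measureReal_univ_pi_Icc_add_sdiff_le {ι : Type*} [Fintype ι] [DecidableEq ι]
    (u v a b : ι → ℝ) (hab : a ≤ b) :
    volume.real (univ.pi (fun i => Icc (u i + a i) (u i + b i))
        \ univ.pi (fun i => Icc (v i + a i) (v i + b i)))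
      ≤ ∑ i, |u i - v i| * ∏ j ∈ Finset.univ.erase i, (b j - a j) := by
  have hwidth : ∀ j, 0 ≤ b j - a j := fun j => sub_nonneg.2 (hab j)
  have hterm : ∀ i, 0 ≤ |u i - v i| * ∏ j ∈ Finset.univ.erase i, (b j - a j) := fun i =>
    mul_nonneg (abs_nonneg _) (Finset.prod_nonneg fun j _ => hwidth j)
  refine ENNReal.toReal_le_of_le_ofReal (Finset.sum_nonneg fun i _ => hterm i) ?_
  calc _ ≤ ∑ i, volume (Icc (u i + a i) (u i + b i) \ Icc (v i + a i) (v i + b i))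
          * ∏ j ∈ Finset.univ.erase i, volume (Icc (u j + a j) (u j + b j)) :=
        Measure.pi_univ_pi_sdiff_le _ _ _
    _ ≤ ∑ i, ENNReal.ofReal |u i - v i|
          * ∏ j ∈ Finset.univ.erase i, ENNReal.ofReal (b j - a j) := by
        gcongr with i _ j _
        · exact Real.volume_Icc_add_sdiff_Icc_add_le _ _ _ _
        · rw [Real.volume_Icc, add_sub_add_left_eq_sub]
    _ = ENNReal.ofReal (∑ i, |u i - v i| * ∏ j ∈ Finset.univ.erase i, (b j - a j)) := by
        rw [ENNReal.ofReal_sum_of_nonneg fun i _ => hterm i]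
        refine Finset.sum_congr rfl fun i _ => ?_
        rw [ENNReal.ofReal_mul (abs_nonneg _), ENNReal.ofReal_prod_of_nonneg fun j _ => hwidth j]

theorem measureReal_cube_sdiff_le {ι : Type*} [Fintype ι] (u v : ι → ℝ) {r : ℝ}
    (hr : 0 < r) :
    volume.real (univ.pi (fun i => Icc (u i + -r) (u i + r))
        \ univ.pi (fun i => Icc (v i + -r) (v i + r)))
      ≤ (2 * r) ^ Fintype.card ι * (1 / (2 * r) * ∑ i, |u i - v i|) := by
  classical
  refine (measureReal_univ_pi_Icc_add_sdiff_le u v _ _ fun _ => by linarith).trans_eq ?_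
  simp only [sub_neg_eq_add, ← two_mul, Finset.mul_sum]
  refine Finset.sum_congr rfl fun i _ => ?_
  rw [← Finset.card_univ, ← Finset.prod_const,
    ← Finset.mul_prod_erase _ _ (Finset.mem_univ i)]
  field_simp

theorem setIntegral_sub_setIntegral_le_measureReal_sdiff {X : Type*} [MeasurableSpace X]
    {μ : Measure X} {f : X → ℝ} {s t : Set X} (hf : Measurable f)
    (hf01 : ∀ x, f x ∈ Icc (0 : ℝ) 1) (ht : MeasurableSet t)
    (hμs : μ s ≠ ⊤) (hμt : μ t ≠ ⊤) :
    ∫ x in s, f x ∂μ - ∫ x in t, f x ∂μ ≤ μ.real (s \ t) := by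
  have hint : ∀ {r : Set X}, μ r ≠ ⊤ → IntegrableOn f r μ := fun hr =>
    Measure.integrableOn_of_bounded hr hf.aestronglyMeasurable (M := 1) <|
      .of_forall fun x => by
        rw [Real.norm_eq_abs, abs_of_nonneg (hf01 x).1]; exact (hf01 x).2
  have h_inter : ∫ x in s ∩ t, f x ∂μ ≤ ∫ x in t, f x ∂μ :=
    setIntegral_mono_set (hint hμt) (.of_forall fun x => (hf01 x).1)
      (.of_forall inter_subset_right)
  have h_sdiff : ∫ x in s \ t, f x ∂μ ≤ μ.real (s \ t) := by
    have hμst : μ (s \ t) ≠ ⊤ := measure_ne_top_of_subset sdiff_subset hμs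
    simpa using setIntegral_mono (hint hμst) (integrableOn_const hμst) fun x => (hf01 x).2
  rw [← integral_inter_add_sdiff ht (hint hμs)]
  linarith

theorem setIntegral_comp_add_univ_pi_Icc {ι E : Type*} [Fintype ι] [NormedAddCommGroup E]
    [NormedSpace ℝ E] (f : (ι → ℝ) → E) (u a b : ι → ℝ) :
    ∫ ρ in univ.pi (fun i => Icc (a i) (b i)), f (u + ρ)
      = ∫ x in univ.pi (fun i => Icc (u i + a i) (u i + b i)), f x := by
  have hpre : (u + ·) ⁻¹' univ.pi (fun i => Icc (u i + a i) (u i + b i))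
      = univ.pi (fun i => Icc (a i) (b i)) := by
    ext ρ
    simp only [mem_preimage, mem_univ_pi, mem_Icc, Pi.add_apply, add_le_add_iff_left]
  rw [← hpre]
  exact (measurePreserving_add_left volume u).setIntegral_preimage_emb
    (measurableEmbedding_addLeft u) f _

theorem uniform_smoothing_lipschitz_general
    (n : ℕ) (lam : ℝ) (hlam : 0 < lam)
    (h : (Fin n → ℝ) → ℝ) (hmeas : Measurable h) (hbd : ∀ x, h x ∈ Set.Icc (0 : ℝ) 1)
    (u v : Fin n → ℝ) :
    |((2 * lam) ^ n)⁻¹ *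
          (∫ ρ in Set.univ.pi fun _ : Fin n => Set.Icc (-lam) lam, h (u + ρ))
        - ((2 * lam) ^ n)⁻¹ *
          (∫ ρ in Set.univ.pi fun _ : Fin n => Set.Icc (-lam) lam, h (v + ρ))|
      ≤ (1 / (2 * lam)) * ∑ i, |u i - v i| := by
  set box : (Fin n → ℝ) → Set (Fin n → ℝ) :=
    fun w => univ.pi fun i => Icc (w i + -lam) (w i + lam)
  have hfinite : ∀ w, volume (box w) ≠ ⊤ := fun _ =>
    (isCompact_univ_pi fun _ => isCompact_Icc).measure_ne_top
  have hdiff : ∀ w w', (∫ x in box w, h x) - ∫ x in box w', h x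
      ≤ (2 * lam) ^ n * (1 / (2 * lam) * ∑ i, |w i - w' i|) := fun w w' =>
    (setIntegral_sub_setIntegral_le_measureReal_sdiff hmeas hbd
      (MeasurableSet.univ_pi fun _ => measurableSet_Icc) (hfinite w) (hfinite w')).trans <|
      (measureReal_cube_sdiff_le w w' hlam).trans_eq (by rw [Fintype.card_fin])
  rw [setIntegral_comp_add_univ_pi_Icc h u (fun _ => -lam) (fun _ => lam),
    setIntegral_comp_add_univ_pi_Icc h v (fun _ => -lam) (fun _ => lam), ← mul_sub, abs_mul,
    abs_of_pos (by positivity), inv_mul_le_iff₀ (by positivity)]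
  exact abs_sub_le_iff.2 ⟨hdiff u v, by simpa only [abs_sub_comm] using hdiff v u⟩

/-- Proposition 1 of the paper: the smoothing
`g(u) = (2λ)⁻ⁿ ∫_{[−λ,λ]ⁿ} h(u + ρ) dρ` of a `[0,1]`-valued measurable function `h` by
uniform noise on the cube `[−λ,λ]ⁿ` is `(1/(2λ))`-Lipschitz in the `ℓ₁` norm. -/
theorem uniform_smoothing_lipschitz
    (n : ℕ) (hn : 0 < n) (lam : ℝ) (hlam : 0 < lam)
    (h : (Fin n → ℝ) → ℝ) (hmeas : Measurable h) (hbd : ∀ x, h x ∈ Set.Icc (0 : ℝ) 1)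
    (u v : Fin n → ℝ) :
    |((2 * lam) ^ n)⁻¹ *
          (∫ ρ in Set.univ.pi fun _ : Fin n => Set.Icc (-lam) lam, h (u + ρ))
        - ((2 * lam) ^ n)⁻¹ *
          (∫ ρ in Set.univ.pi fun _ : Fin n => Set.Icc (-lam) lam, h (v + ρ))|
      ≤ (1 / (2 * lam)) * ∑ i, |u i - v i| :=
  uniform_smoothing_lipschitz_general n lam hlam h hmeas hbd u v
end

section
/- Let (Ω₁, μ₁) and (Ω₂, μ₂) be probability spaces, let U, U', W, W' be measurable spaces, let Y be a countable set of labels, and let θ : U → Ω₁ → U' and φ : W → Ω₂ → W' be maps such that θ(u, ·) and φ(w, ·) are measurable for every u and w, and h : U' × W' → Y be measurable. For u ∈ U, w ∈ W, y ∈ Y define q_y(u, w) = (μ₁ × μ₂)({(ω₁, ω₂) : h(θ(u, ω₁), φ(w, ω₂)) = y}). Assume the law of θ(u, ·) under μ₁ does not depend on u, i.e., the pushforward measures satisfy (θ(u₁, ·))_*μ₁ = (θ(u₂, ·))_*μ₁ for all u₁, u₂ ∈ U. Suppose u, u_δ ∈ U and w, w_δ ∈ W satisfy q_y(u, w_δ)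 = q_y(u, w) for every y ∈ Y. Then q_y(u_δ, w_δ) = q_y(u, w) for every y ∈ Y. -/
/-!
The class probability `q_y(u, w)` is the measure of `h ⁻¹' {y}` under the product of the laws
of `θ(u, ·)` and `φ(w, ·)`, so it depends on `u` only through the law of `θ(u, ·)`. As that law
does not depend on `u`, `q_y(u_δ, w_δ) = q_y(u, w_δ)`, and the embedding robustness gives
`q_y(u, w_δ) = q_y(u, w)`.
-/

open MeasureTheory

namespace MeasureTheory.Measure

theorem prod_preimage_prodMap {α β α' β' : Type*} [MeasurableSpace α] [MeasurableSpace β]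
    [MeasurableSpace α'] [MeasurableSpace β'] (μ : Measure α) (ν : Measure β) [SFinite μ]
    [SFinite ν] {f : α → α'} {g : β → β'} (hf : Measurable f) (hg : Measurable g)
    {s : Set (α' × β')} (hs : MeasurableSet s) :
    (μ.prod ν) (Prod.map f g ⁻¹' s) = ((μ.map f).prod (ν.map g)) s := by
  rw [map_prod_map μ ν hf hg, map_apply (hf.prodMap hg) hs]

end MeasureTheory.Measure

theorem combination_of_perturbations_general
    {Ω₁ Ω₂ : Type*} [MeasurableSpace Ω₁] [MeasurableSpace Ω₂]
    (μ₁ : Measure Ω₁) (μ₂ : Measure Ω₂)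
    [IsProbabilityMeasure μ₁] [IsProbabilityMeasure μ₂]
    {U W : Type*} {U' W' : Type*} [MeasurableSpace U'] [MeasurableSpace W']
    {Y : Type*} [MeasurableSpace Y] [MeasurableSingletonClass Y]
    (θ : U → Ω₁ → U') (φ : W → Ω₂ → W')
    (hθ : ∀ u : U, Measurable (θ u)) (hφ : ∀ w : W, Measurable (φ w))
    (h : U' × W' → Y) (hh : Measurable h)
    (hlaw : ∀ u₁ u₂ : U, Measure.map (θ u₁) μ₁ = Measure.map (θ u₂) μ₁)
    (u uδ : U) (w wδ : W)
    (hemb : ∀ y : Y,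
      (μ₁.prod μ₂) {ω : Ω₁ × Ω₂ | h (θ u ω.1, φ wδ ω.2) = y}
        = (μ₁.prod μ₂) {ω : Ω₁ × Ω₂ | h (θ u ω.1, φ w ω.2) = y}) :
    ∀ y : Y,
      (μ₁.prod μ₂) {ω : Ω₁ × Ω₂ | h (θ uδ ω.1, φ wδ ω.2) = y}
        = (μ₁.prod μ₂) {ω : Ω₁ × Ω₂ | h (θ u ω.1, φ w ω.2) = y} := by
  intro y
  have hy : MeasurableSet (h ⁻¹' {y}) := hh (measurableSet_singleton y)
  calc (μ₁.prod μ₂) (Prod.map (θ uδ) (φ wδ) ⁻¹' (h ⁻¹' {y}))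
      = ((μ₁.map (θ uδ)).prod (μ₂.map (φ wδ))) (h ⁻¹' {y}) :=
        Measure.prod_preimage_prodMap μ₁ μ₂ (hθ uδ) (hφ wδ) hy
    _ = ((μ₁.map (θ u)).prod (μ₂.map (φ wδ))) (h ⁻¹' {y}) := by rw [hlaw uδ u]
    _ = (μ₁.prod μ₂) (Prod.map (θ u) (φ wδ) ⁻¹' (h ⁻¹' {y})) :=
        (Measure.prod_preimage_prodMap μ₁ μ₂ (hθ u) (hφ wδ) hy).symm
    _ = _ := hemb y

/-- Theorem 4 of the paper: if the smoothed classifier's class probabilities are unchanged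
by an embedding perturbation (`w ↦ w_δ`), and the law of the randomly permuted position
component `θ(u, ·)` does not depend on `u`, then the class probabilities are unchanged by
the combination of the permutation perturbation (`u ↦ u_δ`) and the embedding
perturbation. -/
theorem combination_of_perturbations
    {Ω₁ Ω₂ : Type*} [MeasurableSpace Ω₁] [MeasurableSpace Ω₂]
    (μ₁ : Measure Ω₁) (μ₂ : Measure Ω₂)
    [IsProbabilityMeasure μ₁] [IsProbabilityMeasure μ₂]
    {U W : Type*} {U' W' : Type*} [MeasurableSpace U'] [MeasurableSpace W']
    {Y : Type*} [Countable Y] [MeasurableSpace Y] [MeasurableSingletonClass Y]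
    (θ : U → Ω₁ → U') (φ : W → Ω₂ → W')
    (hθ : ∀ u : U, Measurable (θ u)) (hφ : ∀ w : W, Measurable (φ w))
    (h : U' × W' → Y) (hh : Measurable h)
    (hlaw : ∀ u₁ u₂ : U, Measure.map (θ u₁) μ₁ = Measure.map (θ u₂) μ₁)
    (u uδ : U) (w wδ : W)
    (hemb : ∀ y : Y,
      (μ₁.prod μ₂) {ω : Ω₁ × Ω₂ | h (θ u ω.1, φ wδ ω.2) = y}
        = (μ₁.prod μ₂) {ω : Ω₁ × Ω₂ | h (θ u ω.1, φ w ω.2) = y}) :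
    ∀ y : Y,
      (μ₁.prod μ₂) {ω : Ω₁ × Ω₂ | h (θ uδ ω.1, φ wδ ω.2) = y}
        = (μ₁.prod μ₂) {ω : Ω₁ × Ω₂ | h (θ u ω.1, φ w ω.2) = y} :=
  combination_of_perturbations_general μ₁ μ₂ θ φ hθ hφ h hh hlaw u uδ w wδ hemb
end

section
/- Let Y be a set of labels, let n be a positive integer, p ∈ (0,1), and δ a natural number with δ ≤ n. Define P_W(z) = C(n,z)·p^z·(1−p)^{n−z} for 0 ≤ z ≤ n, and P_V(z) = C(n−δ, z−δ)·p^{z−δ}·(1−p)^{n−z} for δ ≤ z ≤ n and P_V(z) = 0 for z < δ. Let h : {0,1,…,n} → Y be any function. Suppose y_A ∈ Y, real numbers 0 < p_B ≤ p_A satisfy: ∑_{z=δ}^{n} P_W(z)·1[h(z) = y_A] ≥ p_A, and for every y ≠ y_A, ∑_{z=0}^{n} P_W(z)·1[h(z) = y] ≤ p_B. Let z_max be a natural number such that for every z ≤ n with P_W(z) ≤ p_B one has z ≤ z_max, and assume C(z_max, δ)·p_B ≤ p_A. Then for every y ≠ y_A, ∑_{z=δ}^{n} P_V(z)·1[h(z)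 = y_A] ≥ ∑_{z=δ}^{n} P_V(z)·1[h(z) = y]. -/
/-!
Multiplying the shifted weight `P_V` by the constant `c = C(n,δ) p^δ` turns it into
`C(z,δ) · P_W(z)`. Every count `z` predicted as a class `y ≠ y_A` has `P_W(z) ≤ p_B`, hence
`z ≤ z_max`, so the `c`-scaled `P_V`-mass of `y` is at most `C(z_max,δ) · p_B ≤ p_A`; the
`c`-scaled `P_V`-mass of `y_A` is at least its `P_W`-mass on `z ≥ δ`, which is at least `p_A`.
-/

open Finset

theorem choose_mul_pow_mul_choose_sub_mul_pow {R : Type*} [CommSemiring R] {n z δ : ℕ}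
    (hδz : δ ≤ z) (p q : R) :
    n.choose δ * p ^ δ * ((n - δ).choose (z - δ) * p ^ (z - δ) * q ^ (n - z)) =
      z.choose δ * (n.choose z * p ^ z * q ^ (n - z)) := by
  calc _ = ((n.choose δ * (n - δ).choose (z - δ) : ℕ) : R) * (p ^ δ * p ^ (z - δ)) *
        q ^ (n - z) := by push_cast; ring
    _ = _ := by
        rw [← Nat.choose_mul hδz, ← pow_add, Nat.add_sub_cancel' hδz]
        push_cast; ring

theorem Finset.sum_mul_le_mul_of_sum_le {ι R : Type*} [Preorder ι] [Semiring R] [PartialOrder R]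
    [IsOrderedRing R] {s t : Finset ι} {w g : ι → R} {m : ι} {b : R} (hst : s ⊆ t) (hw : ∀ i ∈ t, 0 ≤ w i)
    (hb : ∑ i ∈ t, w i ≤ b) (hg : Monotone g) (hgm : 0 ≤ g m)
    (hm : ∀ i ∈ s, w i ≤ b → i ≤ m) :
    ∑ i ∈ s, g i * w i ≤ g m * b := by
  have hwb : ∀ i ∈ s, w i ≤ b := fun i hi => (single_le_sum hw (hst hi)).trans hb
  calc ∑ i ∈ s, g i * w i ≤ ∑ i ∈ s, g m * w i :=
        sum_le_sum fun i hi =>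
          mul_le_mul_of_nonneg_right (hg (hm i hi (hwb i hi))) (hw i (hst hi))
    _ = g m * ∑ i ∈ s, w i := (mul_sum _ _ _).symm
    _ ≤ g m * ∑ i ∈ t, w i :=
        mul_le_mul_of_nonneg_left (sum_le_sum_of_subset_of_nonneg hst fun i hi _ => hw i hi) hgm
    _ ≤ g m * b := mul_le_mul_of_nonneg_left hb hgm

theorem bernoulli_deletion_certified_robustness_general
    {Y : Type*} [DecidableEq Y]
    (n : ℕ) (p : ℝ) (hp0 : 0 < p) (hp1 : p < 1)
    (δ : ℕ) (hδ : δ ≤ n) (h : ℕ → Y) (yA : Y) (pA pB : ℝ)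
    (hA : pA ≤ ∑ z ∈ Finset.Icc δ n,
      ((n.choose z : ℝ) * p ^ z * (1 - p) ^ (n - z)) * (if h z = yA then 1 else 0))
    (hB : ∀ y : Y, y ≠ yA → ∑ z ∈ Finset.range (n + 1),
      ((n.choose z : ℝ) * p ^ z * (1 - p) ^ (n - z)) * (if h z = y then 1 else 0) ≤ pB)
    (zmax : ℕ)
    (hzmax : ∀ z : ℕ, z ≤ n → (n.choose z : ℝ) * p ^ z * (1 - p) ^ (n - z) ≤ pB → z ≤ zmax)
    (hc : (zmax.choose δ : ℝ) * pB ≤ pA)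
    (y : Y) (hy : y ≠ yA) :
    ∑ z ∈ Finset.Icc δ n,
        (((n - δ).choose (z - δ) : ℝ) * p ^ (z - δ) * (1 - p) ^ (n - z)) *
          (if h z = y then 1 else 0)
      ≤ ∑ z ∈ Finset.Icc δ n,
        (((n - δ).choose (z - δ) : ℝ) * p ^ (z - δ) * (1 - p) ^ (n - z)) *
          (if h z = yA then 1 else 0) := by
  have hc0 : 0 < (n.choose δ : ℝ) * p ^ δ :=
    mul_pos (by exact_mod_cast Nat.choose_pos hδ) (pow_pos hp0 δ)
  have hPW : ∀ z, 0 ≤ (n.choose z : ℝ) * p ^ z * (1 - p) ^ (n - z) := fun z =>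
    mul_nonneg (by positivity) (pow_nonneg (sub_nonneg.2 hp1.le) _)
  have hscale : ∀ w : Y, (n.choose δ : ℝ) * p ^ δ * ∑ z ∈ Icc δ n,
      ((n - δ).choose (z - δ) : ℝ) * p ^ (z - δ) * (1 - p) ^ (n - z) *
        (if h z = w then 1 else 0) =
      ∑ z ∈ Icc δ n with h z = w,
        (z.choose δ : ℝ) * (n.choose z * p ^ z * (1 - p) ^ (n - z)) := by
    intro w
    simp only [mul_boole, ← sum_filter, mul_sum]
    exact sum_congr rfl fun z hz =>
      choose_mul_pow_mul_choose_sub_mul_pow (mem_Icc.1 (mem_filter.1 hz).1).1 _ _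
  have hupper := sum_mul_le_mul_of_sum_le (s := {z ∈ Icc δ n | h z = y})
    (t := {z ∈ range (n + 1) | h z = y})
    (filter_subset_filter _ fun z hz => by simp only [mem_Icc, mem_range] at hz ⊢; omega)
    (fun z _ => hPW z) (by simpa only [mul_boole, ← sum_filter] using hB y hy)
    (Nat.mono_cast.comp (Nat.choose_mono δ)) (Nat.cast_nonneg _)
    (fun z hz => hzmax z (mem_Icc.1 (mem_filter.1 hz).1).2)
  have hlower : pA ≤ ∑ z ∈ Icc δ n with h z = yA,
      (z.choose δ : ℝ) * (n.choose z * p ^ z * (1 - p) ^ (n - z)) := by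
    simp only [mul_boole, ← sum_filter] at hA
    refine hA.trans (sum_le_sum fun z hz => le_mul_of_one_le_left (hPW z) ?_)
    exact_mod_cast Nat.choose_pos (mem_Icc.1 (mem_filter.1 hz).1).1
  refine le_of_mul_le_mul_left ?_ hc0
  rw [hscale, hscale]
  exact (hupper.trans hc).trans hlower

/-- Theorem 5 of the paper: certified robustness of the Bernoulli-smoothed classifier
against word deletion, stated at the level of deletion counts. Here
`P_W(z) = C(n,z)·p^z·(1−p)^{n−z}` and, for `δ ≤ z ≤ n`,
`P_V(z) = C(n−δ, z−δ)·p^{z−δ}·(1−p)^{n−z}`. -/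
theorem bernoulli_deletion_certified_robustness
    {Y : Type*} [DecidableEq Y]
    (n : ℕ) (hn : 0 < n) (p : ℝ) (hp0 : 0 < p) (hp1 : p < 1)
    (δ : ℕ) (hδ : δ ≤ n) (h : ℕ → Y) (yA : Y) (pA pB : ℝ)
    (hpB : 0 < pB) (hBA : pB ≤ pA)
    (hA : pA ≤ ∑ z ∈ Finset.Icc δ n,
      ((n.choose z : ℝ) * p ^ z * (1 - p) ^ (n - z)) * (if h z = yA then 1 else 0))
    (hB : ∀ y : Y, y ≠ yA → ∑ z ∈ Finset.range (n + 1),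
      ((n.choose z : ℝ) * p ^ z * (1 - p) ^ (n - z)) * (if h z = y then 1 else 0) ≤ pB)
    (zmax : ℕ)
    (hzmax : ∀ z : ℕ, z ≤ n → (n.choose z : ℝ) * p ^ z * (1 - p) ^ (n - z) ≤ pB → z ≤ zmax)
    (hc : (zmax.choose δ : ℝ) * pB ≤ pA)
    (y : Y) (hy : y ≠ yA) :
    ∑ z ∈ Finset.Icc δ n,
        (((n - δ).choose (z - δ) : ℝ) * p ^ (z - δ) * (1 - p) ^ (n - z)) *
          (if h z = y then 1 else 0)
      ≤ ∑ z ∈ Finset.Icc δ n,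
        (((n - δ).choose (z - δ) : ℝ) * p ^ (z - δ) * (1 - p) ^ (n - z)) *
          (if h z = yA then 1 else 0) :=
  bernoulli_deletion_certified_robustness_general n p hp0 hp1 δ hδ h yA pA pB hA hB zmax hzmax hc y
    hy
end

section
/- Let n be a positive integer, p ∈ (0,1), and δ a natural number with δ ≤ n. Define P_W(z) = C(n,z)·p^z·(1−p)^{n−z} for 0 ≤ z ≤ n, and P_V(z) = C(n−δ, z−δ)·p^{z−δ}·(1−p)^{n−z} for δ ≤ z ≤ n and P_V(z) = 0 for z < δ. Let h : {0,1,…,n} → {0,1} be any function and β ≥ 0 a real number. (1) If Q = {z ∈ {0,…,n} : C(z,δ) ≤ β} and ∑_{z=0}^{n} P_W(z)·1[h(z) = 1] ≥ ∑_{z ∈ Q} P_W(z), then ∑_{z=0}^{n} P_V(z)·1[h(z) = 1] ≥ ∑_{z ∈ Q} P_V(z). (2) If Q = {z ∈ {0,…,n} : C(z,δ) ≥ β} and ∑_{z=0}^{n} P_W(z)·1[h(z) = 1] ≤ ∑_{z ∈ Q} P_W(z), then ∑_{z=0}^{n} P_V(z)·1[h(z) = 1] ≤ ∑_{z ∈ Q}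 P_V(z). -/
/-- The Binomial(n, p) deletion-count probability mass `P_W(z) = C(n,z)·p^z·(1−p)^{n−z}`. -/
noncomputable def PW (n : ℕ) (p : ℝ) (z : ℕ) : ℝ :=
  (n.choose z : ℝ) * p ^ z * (1 - p) ^ (n - z)

/-- The deletion-count probability mass after `δ` words are already deleted:
`P_V(z) = C(n−δ, z−δ)·p^{z−δ}·(1−p)^{n−z}` for `δ ≤ z ≤ n`, and `0` for `z < δ`. -/
noncomputable def PV (n δ : ℕ) (p : ℝ) (z : ℕ) : ℝ :=
  if δ ≤ z then ((n - δ).choose (z - δ) : ℝ) * p ^ (z - δ) * (1 - p) ^ (n - z) else 0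

open Finset

/- Neyman–Pearson: where `c P₁ = r P₀` with `c > 0`, any test `φ` with values in `[0, 1]` and a
threshold test `ψ = 1[r ≤ β]` (or `1[β ≤ r]`) make `(φ - ψ) (c P₁ - β P₀)` of constant sign, and summing
gives `c Σ (φ - ψ) P₁` against `β Σ (φ - ψ) P₀`. For deletion counts the ratio is
`C(n,δ) p^δ P_V(z) = C(z,δ) P_W(z)`, from `C(n,z) C(z,δ) = C(n,δ) C(n-δ,z-δ)`. -/

section NeymanPearson

variable {ι : Type*} (S : Finset ι) {P₀ P₁ r φ : ι → ℝ} {c β : ℝ}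

theorem sum_mul_le_sum_mul_of_sub_mul_nonneg {ψ : ι → ℝ} (hc : 0 < c) (hβ : 0 ≤ β)
    (hpt : ∀ z ∈ S, 0 ≤ (φ z - ψ z) * (c * P₁ z - β * P₀ z))
    (h₀ : ∑ z ∈ S, P₀ z * ψ z ≤ ∑ z ∈ S, P₀ z * φ z) :
    ∑ z ∈ S, P₁ z * ψ z ≤ ∑ z ∈ S, P₁ z * φ z := by
  have hsum : 0 ≤ ∑ z ∈ S, (φ z - ψ z) * (c * P₁ z - β * P₀ z) := sum_nonneg hpt
  have hexpand : ∑ z ∈ S, (φ z - ψ z) * (c * P₁ z - β * P₀ z) =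
      c * (∑ z ∈ S, P₁ z * φ z - ∑ z ∈ S, P₁ z * ψ z) -
        β * (∑ z ∈ S, P₀ z * φ z - ∑ z ∈ S, P₀ z * ψ z) := by
    simp only [mul_sub, mul_sum, ← sum_sub_distrib]
    exact sum_congr rfl fun _ _ => by ring
  have hΔ₀ := mul_nonneg hβ (sub_nonneg.2 h₀)
  have hΔ₁ : 0 ≤ ∑ z ∈ S, P₁ z * φ z - ∑ z ∈ S, P₁ z * ψ z :=
    nonneg_of_mul_nonneg_right (by linarith) hc
  linarith

theorem sum_filter_eq_sum_mul_ite (p : ι → Prop) [DecidablePred p] (P : ι → ℝ) :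
    ∑ z ∈ S with p z, P z = ∑ z ∈ S, P z * if p z then 1 else 0 := by
  simp only [sum_filter, mul_ite, mul_one, mul_zero]

variable (hc : 0 < c) (hβ : 0 ≤ β) (hP₀ : ∀ z ∈ S, 0 ≤ P₀ z)
  (hr : ∀ z ∈ S, c * P₁ z = r z * P₀ z) (hφ : ∀ z ∈ S, 0 ≤ φ z ∧ φ z ≤ 1)
include hc hβ hP₀ hr hφ

theorem neyman_pearson_sum_filter_le_ratio
    (h₀ : ∑ z ∈ S with r z ≤ β, P₀ z ≤ ∑ z ∈ S, P₀ z * φ z) :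
    ∑ z ∈ S with r z ≤ β, P₁ z ≤ ∑ z ∈ S, P₁ z * φ z := by
  rw [sum_filter_eq_sum_mul_ite] at h₀ ⊢
  refine sum_mul_le_sum_mul_of_sub_mul_nonneg S hc hβ (fun z hz => ?_) h₀
  rw [hr z hz, ← sub_mul]
  by_cases hrz : r z ≤ β
  · simp only [hrz, if_true]
    exact mul_nonneg_of_nonpos_of_nonpos (by linarith [hφ z hz])
      (mul_nonpos_of_nonpos_of_nonneg (by linarith) (hP₀ z hz))
  · simp only [hrz, if_false, sub_zero]
    exact mul_nonneg (hφ z hz).1 (mul_nonneg (by linarith) (hP₀ z hz))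

theorem neyman_pearson_sum_filter_ratio_ge
    (h₀ : ∑ z ∈ S, P₀ z * φ z ≤ ∑ z ∈ S with β ≤ r z, P₀ z) :
    ∑ z ∈ S, P₁ z * φ z ≤ ∑ z ∈ S with β ≤ r z, P₁ z := by
  rw [sum_filter_eq_sum_mul_ite] at h₀ ⊢
  refine sum_mul_le_sum_mul_of_sub_mul_nonneg S hc hβ (fun z hz => ?_) h₀
  rw [hr z hz, ← sub_mul]
  by_cases hrz : β ≤ r z
  · simp only [hrz, if_true]
    exact mul_nonneg (by linarith [hφ z hz]) (mul_nonneg (by linarith) (hP₀ z hz))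
  · simp only [hrz, if_false, zero_sub]
    exact mul_nonneg_of_nonpos_of_nonpos (by linarith [hφ z hz])
      (mul_nonpos_of_nonpos_of_nonneg (by linarith) (hP₀ z hz))

end NeymanPearson

theorem PW_nonneg {p : ℝ} (hp0 : 0 ≤ p) (hp1 : p ≤ 1) (n z : ℕ) : 0 ≤ PW n p z := by
  unfold PW
  have : 0 ≤ 1 - p := by linarith
  positivity

theorem choose_mul_PV (n δ : ℕ) (p : ℝ) (z : ℕ) :
    (n.choose δ * p ^ δ) * PV n δ p z = z.choose δ * PW n p z := by
  unfold PV PW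
  by_cases hδz : δ ≤ z
  · have hchoose : (n.choose z * z.choose δ : ℝ) = n.choose δ * (n - δ).choose (z - δ) := by
      exact_mod_cast Nat.choose_mul hδz
    have hpow : p ^ δ * p ^ (z - δ) = p ^ z := by rw [← pow_add, Nat.add_sub_cancel' hδz]
    rw [if_pos hδz, ← hpow]
    linear_combination (p ^ δ * p ^ (z - δ) * (1 - p) ^ (n - z)) * hchoose.symm
  · rw [if_neg hδz, Nat.choose_eq_zero_of_lt (not_le.1 hδz)]
    simp

theorem neyman_pearson_bernoulli_general
    (n : ℕ) (p : ℝ) (hp0 : 0 < p) (hp1 : p < 1)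
    (δ : ℕ) (hδ : δ ≤ n) (h : ℕ → Bool) (β : ℝ) (hβ : 0 ≤ β) (Q : Finset ℕ) :
    ((∀ z : ℕ, z ∈ Q ↔ z ≤ n ∧ (z.choose δ : ℝ) ≤ β) →
      ((∑ z ∈ Q, PW n p z)
          ≤ ∑ z ∈ Finset.range (n + 1), PW n p z * (if h z then 1 else 0)) →
      (∑ z ∈ Q, PV n δ p z)
        ≤ ∑ z ∈ Finset.range (n + 1), PV n δ p z * (if h z then 1 else 0))
    ∧
    ((∀ z : ℕ, z ∈ Q ↔ z ≤ n ∧ β ≤ (z.choose δ : ℝ)) →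
      ((∑ z ∈ Finset.range (n + 1), PW n p z * (if h z then 1 else 0))
          ≤ ∑ z ∈ Q, PW n p z) →
      (∑ z ∈ Finset.range (n + 1), PV n δ p z * (if h z then 1 else 0))
        ≤ ∑ z ∈ Q, PV n δ p z) := by
  have hc : (0 : ℝ) < n.choose δ * p ^ δ := by
    have := Nat.choose_pos hδ
    positivity
  have hPW (z) (_ : z ∈ range (n + 1)) := PW_nonneg hp0.le hp1.le n z
  have hratio (z) (_ : z ∈ range (n + 1)) := choose_mul_PV n δ p z
  have hφ (z) (_ : z ∈ range (n + 1)) : (0 : ℝ) ≤ (if h z then 1 else 0) ∧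
      (if h z then 1 else 0 : ℝ) ≤ 1 := by
    split <;> norm_num
  constructor
  · intro hQ
    obtain rfl : Q = {z ∈ range (n + 1) | (z.choose δ : ℝ) ≤ β} := by
      ext z; simp [hQ]
    exact neyman_pearson_sum_filter_le_ratio _ hc hβ hPW hratio hφ
  · intro hQ
    obtain rfl : Q = {z ∈ range (n + 1) | β ≤ (z.choose δ : ℝ)} := by
      ext z; simp [hQ]
    exact neyman_pearson_sum_filter_ratio_ge _ hc hβ hPW hratio hφ

/-- Lemma 3 of the paper: Neyman–Pearson for Bernoulli noise under different numbers of
ones, for deterministic binary classifiers at the level of deletion counts. -/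
theorem neyman_pearson_bernoulli
    (n : ℕ) (hn : 0 < n) (p : ℝ) (hp0 : 0 < p) (hp1 : p < 1)
    (δ : ℕ) (hδ : δ ≤ n) (h : ℕ → Bool) (β : ℝ) (hβ : 0 ≤ β) (Q : Finset ℕ) :
    ((∀ z : ℕ, z ∈ Q ↔ z ≤ n ∧ (z.choose δ : ℝ) ≤ β) →
      ((∑ z ∈ Q, PW n p z)
          ≤ ∑ z ∈ Finset.range (n + 1), PW n p z * (if h z then 1 else 0)) →
      (∑ z ∈ Q, PV n δ p z)
        ≤ ∑ z ∈ Finset.range (n + 1), PV n δ p z * (if h z then 1 else 0))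
    ∧
    ((∀ z : ℕ, z ∈ Q ↔ z ≤ n ∧ β ≤ (z.choose δ : ℝ)) →
      ((∑ z ∈ Finset.range (n + 1), PW n p z * (if h z then 1 else 0))
          ≤ ∑ z ∈ Q, PW n p z) →
      (∑ z ∈ Finset.range (n + 1), PV n δ p z * (if h z then 1 else 0))
        ≤ ∑ z ∈ Q, PV n δ p z) :=
  neyman_pearson_bernoulli_general n p hp0 hp1 δ hδ h β hβ Q
end

section
/- Let n be a positive integer, p ∈ (0,1), and δ a natural number with δ ≤ n. Then for every subset A of {δ, δ+1, …, n}: C(n,δ)·p^δ · ∑_{z ∈ A} C(n−δ, z−δ)·p^{z−δ}·(1−p)^{n−z} ≥ ∑_{z ∈ A} C(n,z)·p^z·(1−p)^{n−z}. -/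
open scoped BigOperators

theorem Nat.choose_le_choose_mul_choose_sub {n k s : ℕ} (hsk : s ≤ k) :
    n.choose k ≤ n.choose s * (n - s).choose (k - s) :=
  Nat.choose_mul hsk ▸ Nat.le_mul_of_pos_right _ (Nat.choose_pos hsk)

theorem choose_mul_pow_mul_le_of_le {n z δ : ℕ} (hδz : δ ≤ z) {p w : ℝ} (hp : 0 ≤ p)
    (hw : 0 ≤ w) :
    (n.choose z : ℝ) * p ^ z * w
      ≤ (n.choose δ : ℝ) * p ^ δ * (((n - δ).choose (z - δ) : ℝ) * p ^ (z - δ) * w) := by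
  have hchoose : (n.choose z : ℝ) ≤ n.choose δ * (n - δ).choose (z - δ) := by
    exact_mod_cast Nat.choose_le_choose_mul_choose_sub hδz
  have hpow : p ^ z = p ^ δ * p ^ (z - δ) := by rw [← pow_add, Nat.add_sub_cancel' hδz]
  calc (n.choose z : ℝ) * p ^ z * w
      ≤ (n.choose δ * (n - δ).choose (z - δ) : ℝ) * p ^ z * w := by gcongr
    _ = _ := by rw [hpow]; ring

theorem bernoulli_deletion_claim_one_general
    (n : ℕ) (p : ℝ) (hp0 : 0 < p) (hp1 : p < 1)
    (δ : ℕ) (A : Finset ℕ) (hA : A ⊆ Finset.Icc δ n) :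
    ∑ z ∈ A, (n.choose z : ℝ) * p ^ z * (1 - p) ^ (n - z)
      ≤ (n.choose δ : ℝ) * p ^ δ *
        ∑ z ∈ A, ((n - δ).choose (z - δ) : ℝ) * p ^ (z - δ) * (1 - p) ^ (n - z) := by
  rw [Finset.mul_sum]
  refine Finset.sum_le_sum fun z hz => ?_
  exact choose_mul_pow_mul_le_of_le (Finset.mem_Icc.mp (hA hz)).1 hp0.le
    (pow_nonneg (sub_nonneg.mpr hp1.le) _)

/-- The first Claim in the proof of the paper's Theorem 5:
`C(n,δ)·p^δ · ∑_{z∈A} C(n−δ, z−δ)·p^{z−δ}·(1−p)^{n−z} ≥ ∑_{z∈A} C(n,z)·p^z·(1−p)^{n−z}`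
for every subset `A` of `{δ, …, n}`. -/
theorem bernoulli_deletion_claim_one
    (n : ℕ) (hn : 0 < n) (p : ℝ) (hp0 : 0 < p) (hp1 : p < 1)
    (δ : ℕ) (hδ : δ ≤ n) (A : Finset ℕ) (hA : A ⊆ Finset.Icc δ n) :
    ∑ z ∈ A, (n.choose z : ℝ) * p ^ z * (1 - p) ^ (n - z)
      ≤ (n.choose δ : ℝ) * p ^ δ *
        ∑ z ∈ A, ((n - δ).choose (z - δ) : ℝ) * p ^ (z - δ) * (1 - p) ^ (n - z) :=
  bernoulli_deletion_claim_one_general n p hp0 hp1 δ A hA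
end

section
/- Let n be a positive integer, p ∈ (0,1), δ and z_max natural numbers with δ ≤ n. Then for every subset B of {δ, δ+1, …, n} all of whose elements are at most z_max: C(n,δ)·p^δ · ∑_{z ∈ B} C(n−δ, z−δ)·p^{z−δ}·(1−p)^{n−z} ≤ C(z_max, δ) · ∑_{z ∈ B} C(n,z)·p^z·(1−p)^{n−z}. -/
theorem choose_mul_pow_mul_shifted_binomial_term {R : Type*} [CommSemiring R] (p q : R)
    {n δ z : ℕ} (hδz : δ ≤ z) :
    (n.choose δ : R) * p ^ δ * ((n - δ).choose (z - δ) * p ^ (z - δ) * q ^ (n - z))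
      = z.choose δ * (n.choose z * p ^ z * q ^ (n - z)) := by
  have hchoose : (n.choose δ : R) * (n - δ).choose (z - δ) = n.choose z * z.choose δ := by
    rw [← Nat.cast_mul, ← Nat.cast_mul, Nat.choose_mul hδz]
  calc (n.choose δ : R) * p ^ δ * ((n - δ).choose (z - δ) * p ^ (z - δ) * q ^ (n - z))
      = (n.choose δ * (n - δ).choose (z - δ)) * (p ^ δ * p ^ (z - δ)) * q ^ (n - z) := by ring
    _ = z.choose δ * (n.choose z * p ^ z * q ^ (n - z)) := by
      rw [hchoose, ← pow_add, Nat.add_sub_cancel' hδz]; ring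

theorem bernoulli_deletion_claim_two_general
    (n : ℕ) (p : ℝ) (hp0 : 0 < p) (hp1 : p < 1)
    (δ zmax : ℕ) (B : Finset ℕ) (hB : B ⊆ Finset.Icc δ n)
    (hBz : ∀ z ∈ B, z ≤ zmax) :
    (n.choose δ : ℝ) * p ^ δ *
        ∑ z ∈ B, ((n - δ).choose (z - δ) : ℝ) * p ^ (z - δ) * (1 - p) ^ (n - z)
      ≤ (zmax.choose δ : ℝ) *
        ∑ z ∈ B, (n.choose z : ℝ) * p ^ z * (1 - p) ^ (n - z) := by
  rw [Finset.mul_sum, Finset.mul_sum]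
  refine Finset.sum_le_sum fun z hz => ?_
  have hδz : δ ≤ z := (Finset.mem_Icc.mp (hB hz)).1
  have hq : (0 : ℝ) ≤ 1 - p := by linarith
  rw [choose_mul_pow_mul_shifted_binomial_term p (1 - p) hδz]
  gcongr
  exact hBz z hz

/-- The second Claim in the proof of the paper's Theorem 5:
`C(n,δ)·p^δ · ∑_{z∈B} C(n−δ, z−δ)·p^{z−δ}·(1−p)^{n−z}
  ≤ C(z_max, δ) · ∑_{z∈B} C(n,z)·p^z·(1−p)^{n−z}`
for every subset `B` of `{δ, …, n}` all of whose elements are at most `z_max`. -/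
theorem bernoulli_deletion_claim_two
    (n : ℕ) (hn : 0 < n) (p : ℝ) (hp0 : 0 < p) (hp1 : p < 1)
    (δ zmax : ℕ) (hδ : δ ≤ n) (B : Finset ℕ) (hB : B ⊆ Finset.Icc δ n)
    (hBz : ∀ z ∈ B, z ≤ zmax) :
    (n.choose δ : ℝ) * p ^ δ *
        ∑ z ∈ B, ((n - δ).choose (z - δ) : ℝ) * p ^ (z - δ) * (1 - p) ^ (n - z)
      ≤ (zmax.choose δ : ℝ) *
        ∑ z ∈ B, (n.choose z : ℝ) * p ^ z * (1 - p) ^ (n - z) :=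
  bernoulli_deletion_claim_two_general n p hp0 hp1 δ zmax B hB hBz
end
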